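/- For Ω ∈ 𝕊^N with Im(Ω(1)·conj(Ω(0))) ≠ 0, define the symmetry-breaking map B(Ω) as follows: first set Ω' = conj(Ω(0))·Ω (so Ω'(0) = 1); then output Ω' if Im(Ω'(1)) > 0, and conj(Ω') otherwise. Then B(Ω) lies in H = {Ω : Ω(0) = 1, Im(Ω(1)) > 0}, B(Ω) is in the {±1}×𝕊-orbit of Ω, and B is constant on orbits: B(z·Ω) = B(Ω) and B(z·conj(Ω)) = B(Ω) for all z ∈ 𝕊. -/

import Mathlib

open Classical in
/-- The symmetry-breaking map: first transfer the global phase so that the 0-th entry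
becomes 1, then conjugate (entrywise inversion on the circle) if the imaginary part of
the 1st entry is not positive. -/
noncomputable def breakMap {N : ℕ} (hN : 2 ≤ N) (Ω : Fin N → Circle) : Fin N → Circle :=
  let Ω' : Fin N → Circle := fun j => (Ω ⟨0, by omega⟩)⁻¹ * Ω j
  if 0 < ((Ω' ⟨1, by omega⟩ : ℂ)).im then Ω' else fun j => (Ω' j)⁻¹

/-!
Dividing by the `0`-th entry kills the global phase `z`, and turns `z • Ω⁻¹` into the
entrywise inverse of the normalised `Ω`. On the circle inversion is complex conjugation,
so it flips the sign of the imaginary part of the `1`-st entry; as long as that part is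
nonzero, the conjugate-flip step therefore sends `Ω` and `Ω⁻¹` to the same point, the one
whose `1`-st entry lies in the upper half-plane.
-/

open ComplexConjugate

section FixPhase

variable {ι G : Type*} [CommGroup G]

def fixPhase (i₀ : ι) (Ω : ι → G) : ι → G := fun j => (Ω i₀)⁻¹ * Ω j

@[simp]
lemma fixPhase_apply_self (i₀ : ι) (Ω : ι → G) : fixPhase i₀ Ω i₀ = 1 :=
  inv_mul_cancel _

lemma fixPhase_mul_left (i₀ : ι) (z : G) (Ω : ι → G) :
    fixPhase i₀ (fun j => z * Ω j) = fixPhase i₀ Ω := by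
  funext j
  simp only [fixPhase, mul_inv, mul_mul_mul_comm, inv_mul_cancel, one_mul]

lemma inv_fixPhase (i₀ : ι) (Ω : ι → G) :
    (fixPhase i₀ Ω)⁻¹ = fun j => Ω i₀ * (Ω j)⁻¹ := by
  funext j
  simp only [fixPhase, Pi.inv_apply, mul_inv, inv_inv, mul_comm]

lemma fixPhase_mul_inv (i₀ : ι) (z : G) (Ω : ι → G) :
    fixPhase i₀ (fun j => z * (Ω j)⁻¹) = (fixPhase i₀ Ω)⁻¹ := by
  rw [fixPhase_mul_left, inv_fixPhase]
  funext j
  simp only [fixPhase, inv_inv]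

end FixPhase

lemma Circle.coe_inv_mul (z w : Circle) : ((z⁻¹ * w : Circle) : ℂ) = w * conj (z : ℂ) := by
  rw [Circle.coe_mul, Circle.coe_inv_eq_conj, mul_comm]

lemma Circle.im_inv (z : Circle) : ((z⁻¹ : Circle) : ℂ).im = -(z : ℂ).im := by
  rw [Circle.coe_inv_eq_conj, Complex.conj_im]

section FlipConj

variable {ι : Type*}

noncomputable def flipConj (i₁ : ι) (Ω : ι → Circle) : ι → Circle :=
  if 0 < (Ω i₁ : ℂ).im then Ω else Ω⁻¹

lemma flipConj_eq_or (i₁ : ι) (Ω : ι → Circle) :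
    flipConj i₁ Ω = Ω ∨ flipConj i₁ Ω = Ω⁻¹ := by
  unfold flipConj
  split_ifs
  exacts [Or.inl rfl, Or.inr rfl]

lemma flipConj_apply_of_eq_one {i₁ i : ι} {Ω : ι → Circle} (h : Ω i = 1) :
    flipConj i₁ Ω i = 1 := by
  rcases flipConj_eq_or i₁ Ω with hΩ | hΩ <;> simp [hΩ, h]

variable {i₁ : ι} {Ω : ι → Circle}

lemma im_flipConj_pos (h : (Ω i₁ : ℂ).im ≠ 0) : 0 < (flipConj i₁ Ω i₁ : ℂ).im := by
  unfold flipConj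
  split_ifs with hpos
  · exact hpos
  · rw [Pi.inv_apply, Circle.im_inv]
    exact neg_pos.2 (lt_of_le_of_ne (not_lt.1 hpos) h)

lemma flipConj_inv (h : (Ω i₁ : ℂ).im ≠ 0) : flipConj i₁ Ω⁻¹ = flipConj i₁ Ω := by
  unfold flipConj
  simp only [Pi.inv_apply, Circle.im_inv, neg_pos, inv_inv]
  rcases h.lt_or_gt with hneg | hpos
  · rw [if_pos hneg, if_neg hneg.not_gt]
  · rw [if_neg hpos.not_gt, if_pos hpos]

end FlipConj

lemma breakMap_eq_flipConj_fixPhase {N : ℕ} (hN : 2 ≤ N) (Ω : Fin N → Circle) :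
    breakMap hN Ω = flipConj ⟨1, by omega⟩ (fixPhase ⟨0, by omega⟩ Ω) :=
  rfl

theorem breakMap_spec {N : ℕ} (hN : 2 ≤ N) (Ω : Fin N → Circle)
    (h : ((Ω ⟨1, by omega⟩ : ℂ) * starRingEnd ℂ (Ω ⟨0, by omega⟩ : ℂ)).im ≠ 0) :
    ((breakMap hN Ω ⟨0, by omega⟩ : ℂ) = 1 ∧
      0 < ((breakMap hN Ω ⟨1, by omega⟩ : ℂ)).im) ∧
    (∃ z : Circle, (breakMap hN Ω = fun j => z * Ω j) ∨
      (breakMap hN Ω = fun j => z * (Ω j)⁻¹)) ∧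
    (∀ z : Circle, breakMap hN (fun j => z * Ω j) = breakMap hN Ω) ∧
    (∀ z : Circle, breakMap hN (fun j => z * (Ω j)⁻¹) = breakMap hN Ω) := by
  have him : ((fixPhase ⟨0, by omega⟩ Ω ⟨1, by omega⟩ : Circle) : ℂ).im ≠ 0 := by
    rwa [fixPhase, Circle.coe_inv_mul]
  simp only [breakMap_eq_flipConj_fixPhase]
  refine ⟨⟨?_, im_flipConj_pos him⟩, ?_, fun z => ?_, fun z => ?_⟩
  · rw [flipConj_apply_of_eq_one (fixPhase_apply_self _ _), Circle.coe_one]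
  · rcases flipConj_eq_or ⟨1, by omega⟩ (fixPhase ⟨0, by omega⟩ Ω) with hΩ | hΩ
    · exact ⟨_, Or.inl hΩ⟩
    · exact ⟨_, Or.inr (hΩ.trans (inv_fixPhase _ _))⟩
  · rw [fixPhase_mul_left]
  · rw [fixPhase_mul_inv, flipConj_inv him]
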